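/- arXiv:2107.11611 — 3 statements merged into one kernel-verified Lean document; each statement's English description precedes it below -/
import Mathlib

section
/- Fix τ > 0. (i) If W is a stochastic (respectively substochastic) solution of equation (QW), then Y = τ^{-1}(W − I) is a generator (respectively subgenerator) satisfying F(Y) = 0. (ii) Consequently, if any two generator solutions of F(Y) = 0 are equal, then equation (QW) has at most one stochastic solution; and if any two subgenerator solutions of F(Y) = 0 are equal, then equation (QW) has at most one substochastic solution. -/
open MeasureTheory Matrix Filter

noncomputable section

/-- Entrywise Bochner integral over `(0,∞)` of a matrix-valued function. -/
def intP {n : ℕ} (f : ℝ → Matrix (Fin n) (Fin n) ℝ) : Matrix (Fin n) (Fin n) ℝ :=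
  Matrix.of fun i j => ∫ x in Set.Ioi (0:ℝ), f x i j

/-- Matrix exponential. -/
def mexp {n : ℕ} (A : Matrix (Fin n) (Fin n) ℝ) : Matrix (Fin n) (Fin n) ℝ :=
  NormedSpace.exp A

/-- `∫_0^x e^{Gs} ds` (entrywise). -/
def cumExp {n : ℕ} (G : Matrix (Fin n) (Fin n) ℝ) (x : ℝ) : Matrix (Fin n) (Fin n) ℝ :=
  Matrix.of fun i j => ∫ s in (0:ℝ)..x, mexp (s • G) i j

/-- Irreducibility of a square matrix: for all `i ≠ j` there is a path from `i` to `j`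
along nonzero entries. -/
def MatIrr {m : Type*} (A : Matrix m m ℝ) : Prop :=
  ∀ i j : m, i ≠ j → ∃ (r : ℕ) (p : ℕ → m), p 0 = i ∧ p r = j ∧
    ∀ k < r, A (p k) (p (k+1)) ≠ 0

/-- Spectral radius of a real matrix: supremum of the moduli of its complex eigenvalues. -/
def specRad {m : Type*} [Fintype m] [DecidableEq m] (A : Matrix m m ℝ) : ℝ :=
  sSup ((fun z : ℂ => ‖z‖) '' (spectrum ℂ (A.map (algebraMap ℝ ℂ))))

/-- `A` is an M-matrix: `A = s•I − B` with `B ≥ 0` entrywise and `ρ(B) ≤ s`. -/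
def IsMMatrix {m : Type*} [Fintype m] [DecidableEq m] (A : Matrix m m ℝ) : Prop :=
  ∃ (s : ℝ) (B : Matrix m m ℝ), (∀ i j, 0 ≤ B i j) ∧ specRad B ≤ s ∧
    A = s • (1 : Matrix m m ℝ) - B

/-- `A = M − N` is a regular splitting: `M` invertible, `M⁻¹ ≥ 0`, `N ≥ 0`. -/
def RegSplit {n : ℕ} (A M N : Matrix (Fin n) (Fin n) ℝ) : Prop :=
  A = M - N ∧ IsUnit M.det ∧ (∀ i j, 0 ≤ M⁻¹ i j) ∧ (∀ i j, 0 ≤ N i j)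

/-- The complex characteristic roots (eigenvalues with algebraic multiplicity)
of a real matrix. -/
def cRoots {n : ℕ} (Y : Matrix (Fin n) (Fin n) ℝ) : Multiset ℂ :=
  ((Y.map (algebraMap ℝ ℂ)).charpoly).roots

/-- substochastic matrix -/
def Substoch {n : ℕ} (W : Matrix (Fin n) (Fin n) ℝ) : Prop :=
  (∀ i j, 0 ≤ W i j) ∧ ∀ i, ∑ j, W i j ≤ 1

/-- stochastic matrix -/
def StochMat {n : ℕ} (W : Matrix (Fin n) (Fin n) ℝ) : Prop :=
  (∀ i j, 0 ≤ W i j) ∧ ∀ i, ∑ j, W i j = 1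

/-- subgenerator -/
def IsSubGen {n : ℕ} (Y : Matrix (Fin n) (Fin n) ℝ) : Prop :=
  (∀ i j, i ≠ j → 0 ≤ Y i j) ∧ ∀ i, ∑ j, Y i j ≤ 0

/-- generator -/
def IsGen {n : ℕ} (Y : Matrix (Fin n) (Fin n) ℝ) : Prop :=
  (∀ i j, i ≠ j → 0 ≤ Y i j) ∧ ∀ i, ∑ j, Y i j = 0

/-- The data of a Markov-modulated Lévy process: phase generator `Q`, Brownian
drifts `a` and volatilities `s` (denoted `σ` in the paper), Lévy densities `ν`,
phase-change jump densities `μ`, and `U0 = U(0)` (the atoms at 0 of the jump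
distributions). -/
structure Dat (n : ℕ) where
  Q : Matrix (Fin n) (Fin n) ℝ
  a : Fin n → ℝ
  s : Fin n → ℝ
  ν : Fin n → ℝ → ℝ
  μ : Fin n → Fin n → ℝ → ℝ
  U0 : Matrix (Fin n) (Fin n) ℝ

namespace Dat

variable {n : ℕ} (D : Dat n)

/-- The standing assumptions of the paper. -/
structure Good : Prop where
  hn : 1 ≤ n
  hQoff : ∀ i j, i ≠ j → 0 ≤ D.Q i j
  hQrow : ∀ i, ∑ j, D.Q i j = 0
  hQirr : MatIrr D.Q
  hs : ∀ i, 0 < D.s i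
  hνc : ∀ i, ContinuousOn (D.ν i) (Set.Ioi 0)
  hν0 : ∀ i, ∀ x ∈ Set.Ioi (0:ℝ), 0 ≤ D.ν i x
  hνi : ∀ i, IntegrableOn (D.ν i) (Set.Ioi 0)
  hU0d : ∀ i, D.U0 i i = 1
  hU0o : ∀ i j, i ≠ j → D.U0 i j ∈ Set.Icc (0:ℝ) 1
  hμc : ∀ i j, i ≠ j → ContinuousOn (D.μ i j) (Set.Ioi 0)
  hμ0 : ∀ i j, ∀ x ∈ Set.Ioi (0:ℝ), 0 ≤ D.μ i j x
  hμi : ∀ i j, i ≠ j → IntegrableOn (D.μ i j) (Set.Ioi 0)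
  hμU : ∀ i j, i ≠ j → D.U0 i j + ∫ x in Set.Ioi (0:ℝ), D.μ i j x = 1
  hμd : ∀ i x, D.μ i i x = 0

/-- `Δ_a`. -/
def Da : Matrix (Fin n) (Fin n) ℝ := Matrix.diagonal D.a

/-- `Δ_{σ²}`. -/
def Ds : Matrix (Fin n) (Fin n) ℝ := Matrix.diagonal fun i => (D.s i)^2

/-- `Δ_ν(x)`. -/
def Dν (x : ℝ) : Matrix (Fin n) (Fin n) ℝ := Matrix.diagonal fun i => D.ν i x

/-- `Q ∘ μ(x)` (Hadamard product). -/
def Qμ (x : ℝ) : Matrix (Fin n) (Fin n) ℝ := Matrix.of fun i j => D.Q i j * D.μ i j x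

/-- The matrix function `F`. -/
def F (Y : Matrix (Fin n) (Fin n) ℝ) : Matrix (Fin n) (Fin n) ℝ :=
  D.Da * Y + (1/2 : ℝ) • (D.Ds * (Y * Y))
    + intP (fun x => D.Dν x * (mexp (x • Y) - 1))
    + Matrix.hadamard D.Q D.U0
    + intP (fun x => D.Qμ x * mexp (x • Y))

/-- The drift `κ`, relative to the stationary vector `π` of `Q`. -/
def kappa (π : Fin n → ℝ) : ℝ :=
  ∑ i, π i * (D.a i + (∫ x in Set.Ioi (0:ℝ), x * D.ν i x)
    + ∑ j, D.Q i j * ∫ x in Set.Ioi (0:ℝ), x * D.μ i j x)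

/-- `π` is the (positive) stationary probability vector of `Q`. -/
def IsStat (π : Fin n → ℝ) : Prop :=
  (∀ i, 0 < π i) ∧ (∀ j, ∑ i, π i * D.Q i j = 0) ∧ ∑ i, π i = 1

/-- `H(τ, W)`. -/
def H (τ : ℝ) (W : Matrix (Fin n) (Fin n) ℝ) : Matrix (Fin n) (Fin n) ℝ :=
  intP (fun x => D.Dν x * (mexp ((τ⁻¹ * x) • (W - 1)) - 1))

/-- `K(τ, W)`. -/
def K (τ : ℝ) (W : Matrix (Fin n) (Fin n) ℝ) : Matrix (Fin n) (Fin n) ℝ :=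
  Matrix.hadamard D.Q D.U0 + intP (fun x => D.Qμ x * mexp ((τ⁻¹ * x) • (W - 1)))

/-- `B_1`. -/
def B1 : Matrix (Fin n) (Fin n) ℝ := D.Ds

/-- `B_0(τ)`. -/
def B0 (τ : ℝ) : Matrix (Fin n) (Fin n) ℝ := (2*τ) • D.Da - (2:ℝ) • D.Ds

/-- `B_{-1}(τ, W)`. -/
def Bm1 (τ : ℝ) (W : Matrix (Fin n) (Fin n) ℝ) : Matrix (Fin n) (Fin n) ℝ :=
  D.Ds - (2*τ) • D.Da + (2*τ^2) • (D.H τ W + D.K τ W)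

/-- Equation (QW): `B₁W² + B₀(τ)W + B₋₁(τ,W) = 0`. -/
def QW (τ : ℝ) (W : Matrix (Fin n) (Fin n) ℝ) : Prop :=
  D.B1 * (W * W) + D.B0 τ * W + D.Bm1 τ W = 0

/-- `B̃_{-1}(τ, W) = −B₀(τ)⁻¹ B₋₁(τ,W)`. -/
def Btm1 (τ : ℝ) (W : Matrix (Fin n) (Fin n) ℝ) : Matrix (Fin n) (Fin n) ℝ :=
  -(D.B0 τ)⁻¹ * D.Bm1 τ W

/-- `B̃_1(τ) = −B₀(τ)⁻¹ B₁`. -/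
def Bt1 (τ : ℝ) : Matrix (Fin n) (Fin n) ℝ := -(D.B0 τ)⁻¹ * D.B1

/-- `0 < τ < τ*`: `troot i` is the unique positive root `τ_i` of the quadratic
`σ_i² − 2τ a_i + 2τ²(q_ii − ∫_0^∞ ν_i)`, `τ` is positive, `τ < σ_i²/a_i` whenever
`a_i > 0`, and `τ < τ_i` for all `i`. -/
def TauOK (troot : Fin n → ℝ) (τ : ℝ) : Prop :=
  (∀ i, 0 < troot i ∧
      (D.s i)^2 - 2 * troot i * D.a i
        + 2 * (troot i)^2 * (D.Q i i - ∫ x in Set.Ioi (0:ℝ), D.ν i x) = 0 ∧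
      ∀ t > 0, (D.s i)^2 - 2 * t * D.a i
        + 2 * t^2 * (D.Q i i - ∫ x in Set.Ioi (0:ℝ), D.ν i x) = 0 → t = troot i) ∧
  0 < τ ∧ (∀ i, 0 < D.a i → τ < (D.s i)^2 / D.a i) ∧ (∀ i, τ < troot i)

/-- `ρ_i = ∫_0^∞ ν_i`. -/
def rho (i : Fin n) : ℝ := ∫ x in Set.Ioi (0:ℝ), D.ν i x

/-- `λ_i = ρ_i + |q_ii|`. -/
def lam (i : Fin n) : ℝ := D.rho i + |D.Q i i|

/-- `b_i`. -/
def b (i : Fin n) : ℝ := (Real.sqrt ((D.a i)^2 + 2 * D.lam i * (D.s i)^2) + D.a i) / (D.s i)^2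

/-- `c_i`. -/
def c (i : Fin n) : ℝ := D.b i - 2 * D.a i / (D.s i)^2

/-- `Ĉ(X)`. -/
def Chat (X : Matrix (Fin n) (Fin n) ℝ) : Matrix (Fin n) (Fin n) ℝ :=
  Matrix.hadamard (D.Q - Matrix.diagonal fun i => D.Q i i) D.U0
    + intP (fun x => D.Dν x * mexp (x • (X - Matrix.diagonal D.b)))
    + intP (fun x => D.Qμ x * mexp (x • (X - Matrix.diagonal D.b)))

/-- `NARE(W)`: the Riccati equation `S² − Δ_c S − S Δ_b + 2Δ_{σ²}⁻¹ Ĉ(W) = 0` in `S`. -/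
def NARE (W S : Matrix (Fin n) (Fin n) ℝ) : Prop :=
  S * S - Matrix.diagonal D.c * S - S * Matrix.diagonal D.b
    + (2:ℝ) • (Matrix.diagonal (fun i => ((D.s i)^2)⁻¹) * D.Chat W) = 0

/-- `S` is the minimal nonnegative solution of `NARE(W)`. -/
def MinSolNARE (W S : Matrix (Fin n) (Fin n) ℝ) : Prop :=
  (∀ i j, 0 ≤ S i j) ∧ D.NARE W S ∧
    ∀ T, (∀ i j, 0 ≤ T i j) → D.NARE W T → ∀ i j, S i j ≤ T i j

/-- `Λ` (relative to `G`). -/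
def Lam (G : Matrix (Fin n) (Fin n) ℝ) : Matrix (Fin n) (Fin n) ℝ :=
  intP (fun x => D.Dν x * cumExp G x) + intP (fun x => D.Qμ x * cumExp G x)

/-- `Θ = −2Δ_a − Δ_{σ²}G − 2Λ` (relative to `G`). -/
def Theta (G : Matrix (Fin n) (Fin n) ℝ) : Matrix (Fin n) (Fin n) ℝ :=
  (-2 : ℝ) • D.Da - D.Ds * G - (2:ℝ) • D.Lam G

/-- Integrability of the first moments `∫ x ν_i(x) dx`, `∫ x μ_ij(x) dx`. -/
def Moments : Prop :=
  (∀ i, IntegrableOn (fun x => x * D.ν i x) (Set.Ioi (0:ℝ))) ∧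
  (∀ i j, IntegrableOn (fun x => x * D.μ i j x) (Set.Ioi (0:ℝ)))

end Dat

/-!
Writing `W = 1 + τ • Y`, the left-hand side of (QW) is `2τ² • F(Y)`: the exponentials in `H` and
`K` are `e^{xY}`, and the polynomial part expands to `2τ²(Δ_a Y + ½ Δ_{σ²} Y²)`. So (QW) at `W` is
`F = 0` at `Y = τ⁻¹ • (W - 1)`, and this affine change of variables is injective and sends
(sub)stochastic matrices to (sub)generators.
-/

section GeneratorOfStochastic

variable {n : ℕ} {τ : ℝ} {W : Matrix (Fin n) (Fin n) ℝ}

theorem inv_smul_sub_one_apply_of_ne {i j : Fin n} (hij : i ≠ j) :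
    (τ⁻¹ • (W - 1)) i j = τ⁻¹ * W i j := by
  rw [Matrix.smul_apply, Matrix.sub_apply, one_apply_ne hij, sub_zero, smul_eq_mul]

theorem sum_inv_smul_sub_one_apply (i : Fin n) :
    ∑ j, (τ⁻¹ • (W - 1)) i j = τ⁻¹ * (∑ j, W i j - 1) := by
  simp only [Matrix.smul_apply, Matrix.sub_apply, smul_eq_mul, ← Finset.mul_sum,
    Finset.sum_sub_distrib, one_apply, Finset.sum_ite_eq, Finset.mem_univ, if_true]

theorem inv_smul_sub_one_injective (hτ : τ ≠ 0) :
    Function.Injective fun W : Matrix (Fin n) (Fin n) ℝ => τ⁻¹ • (W - 1) :=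
  (smul_right_injective _ (inv_ne_zero hτ)).comp sub_left_injective

theorem IsSubGen.inv_smul_sub_one (hτ : 0 ≤ τ) (hW : Substoch W) :
    IsSubGen (τ⁻¹ • (W - 1)) := by
  refine ⟨fun i j hij => ?_, fun i => ?_⟩
  · rw [inv_smul_sub_one_apply_of_ne hij]
    exact mul_nonneg (inv_nonneg.mpr hτ) (hW.1 i j)
  · rw [sum_inv_smul_sub_one_apply]
    exact mul_nonpos_of_nonneg_of_nonpos (inv_nonneg.mpr hτ) (by linarith [hW.2 i])

theorem IsGen.inv_smul_sub_one (hτ : 0 ≤ τ) (hW : StochMat W) :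
    IsGen (τ⁻¹ • (W - 1)) := by
  refine ⟨fun i j hij => ?_, fun i => ?_⟩
  · rw [inv_smul_sub_one_apply_of_ne hij]
    exact mul_nonneg (inv_nonneg.mpr hτ) (hW.1 i j)
  · rw [sum_inv_smul_sub_one_apply, hW.2 i, sub_self, mul_zero]

end GeneratorOfStochastic

namespace Dat

variable {n : ℕ} (D : Dat n) {τ : ℝ}

theorem smul_F_inv_smul_sub_one (hτ : τ ≠ 0) (W : Matrix (Fin n) (Fin n) ℝ) :
    (2 * τ ^ 2) • D.F (τ⁻¹ • (W - 1)) = D.B1 * (W * W) + D.B0 τ * W + D.Bm1 τ W := by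
  set Y := τ⁻¹ • (W - 1) with hY
  have hexp : ∀ x : ℝ, (τ⁻¹ * x) • (W - 1) = x • Y := fun x => by
    rw [hY, smul_smul, mul_comm]
  have hW : W = τ • Y + 1 := by
    rw [hY, smul_smul, mul_inv_cancel₀ hτ, one_smul, sub_add_cancel]
  simp only [F, B1, B0, Bm1, H, K, hexp]
  rw [hW]
  simp only [mul_add, add_mul, mul_one, one_mul, sub_mul, smul_mul_assoc, mul_smul_comm]
  module

theorem qw_iff_F_inv_smul_sub_one_eq_zero (hτ : τ ≠ 0) (W : Matrix (Fin n) (Fin n) ℝ) :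
    D.QW τ W ↔ D.F (τ⁻¹ • (W - 1)) = 0 := by
  rw [QW, ← D.smul_F_inv_smul_sub_one hτ, smul_eq_zero]
  exact or_iff_right (by positivity)

end Dat

theorem stmt1_general {n : ℕ} (D : Dat n) (τ : ℝ) (hτ : 0 < τ) :
    ((∀ W, StochMat W → D.QW τ W →
        IsGen (τ⁻¹ • (W - 1)) ∧ D.F (τ⁻¹ • (W - 1)) = 0) ∧
     (∀ W, Substoch W → D.QW τ W →
        IsSubGen (τ⁻¹ • (W - 1)) ∧ D.F (τ⁻¹ • (W - 1)) = 0)) ∧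
    ((∀ Y₁ Y₂ : Matrix (Fin n) (Fin n) ℝ,
        IsGen Y₁ → D.F Y₁ = 0 → IsGen Y₂ → D.F Y₂ = 0 → Y₁ = Y₂) →
      ∀ W₁ W₂, StochMat W₁ → D.QW τ W₁ → StochMat W₂ → D.QW τ W₂ → W₁ = W₂) ∧
    ((∀ Y₁ Y₂ : Matrix (Fin n) (Fin n) ℝ,
        IsSubGen Y₁ → D.F Y₁ = 0 → IsSubGen Y₂ → D.F Y₂ = 0 → Y₁ = Y₂) →
      ∀ W₁ W₂, Substoch W₁ → D.QW τ W₁ → Substoch W₂ → D.QW τ W₂ → W₁ = W₂) := by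
  have hF := D.qw_iff_F_inv_smul_sub_one_eq_zero hτ.ne'
  have hgen : ∀ W, StochMat W → D.QW τ W →
      IsGen (τ⁻¹ • (W - 1)) ∧ D.F (τ⁻¹ • (W - 1)) = 0 := fun W hW hQW =>
    ⟨IsGen.inv_smul_sub_one hτ.le hW, (hF W).mp hQW⟩
  have hsubgen : ∀ W, Substoch W → D.QW τ W →
      IsSubGen (τ⁻¹ • (W - 1)) ∧ D.F (τ⁻¹ • (W - 1)) = 0 := fun W hW hQW =>
    ⟨IsSubGen.inv_smul_sub_one hτ.le hW, (hF W).mp hQW⟩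
  refine ⟨⟨hgen, hsubgen⟩, fun huniq W₁ W₂ hW₁ hQ₁ hW₂ hQ₂ => ?_,
    fun huniq W₁ W₂ hW₁ hQ₁ hW₂ hQ₂ => ?_⟩
  · obtain ⟨hY₁, hF₁⟩ := hgen W₁ hW₁ hQ₁
    obtain ⟨hY₂, hF₂⟩ := hgen W₂ hW₂ hQ₂
    exact inv_smul_sub_one_injective hτ.ne' (huniq _ _ hY₁ hF₁ hY₂ hF₂)
  · obtain ⟨hY₁, hF₁⟩ := hsubgen W₁ hW₁ hQ₁
    obtain ⟨hY₂, hF₂⟩ := hsubgen W₂ hW₂ hQ₂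
    exact inv_smul_sub_one_injective hτ.ne' (huniq _ _ hY₁ hF₁ hY₂ hF₂)

/-- stochastic/substochastic solutions of (QW) give (sub)generator
solutions of `F(Y)=0`, and uniqueness transfers. -/
theorem stmt1 {n : ℕ} (D : Dat n) (hD : D.Good) (τ : ℝ) (hτ : 0 < τ) :
    ((∀ W, StochMat W → D.QW τ W →
        IsGen (τ⁻¹ • (W - 1)) ∧ D.F (τ⁻¹ • (W - 1)) = 0) ∧
     (∀ W, Substoch W → D.QW τ W →
        IsSubGen (τ⁻¹ • (W - 1)) ∧ D.F (τ⁻¹ • (W - 1)) = 0)) ∧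
    ((∀ Y₁ Y₂ : Matrix (Fin n) (Fin n) ℝ,
        IsGen Y₁ → D.F Y₁ = 0 → IsGen Y₂ → D.F Y₂ = 0 → Y₁ = Y₂) →
      ∀ W₁ W₂, StochMat W₁ → D.QW τ W₁ → StochMat W₂ → D.QW τ W₂ → W₁ = W₂) ∧
    ((∀ Y₁ Y₂ : Matrix (Fin n) (Fin n) ℝ,
        IsSubGen Y₁ → D.F Y₁ = 0 → IsSubGen Y₂ → D.F Y₂ = 0 → Y₁ = Y₂) →
      ∀ W₁ W₂, Substoch W₁ → D.QW τ W₁ → Substoch W₂ → D.QW τ W₂ → W₁ = W₂) :=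
  stmt1_general D τ hτ
end
end

section
/- Assume that W is a stochastic or substochastic n×n matrix and that 0 < τ < τ*. Then the matrices B_{-1}(τ,W), −B_0(τ) and B_1 are entrywise nonnegative, and (B_{-1}(τ,W) + B_0(τ) + B_1)1 ≤ 0. -/
open MeasureTheory Matrix Filter

noncomputable section

/-! For `τ > 0` and substochastic `W`, each `e^{τ⁻¹x(W - I)}` with `x > 0` is substochastic
(it is `e^{-c} e^{cW}` with `c = τ⁻¹x`), so `H(τ,W)` and `K(τ,W)` are subgenerators whose
diagonals are bounded below by `-∫ν_i` and `q_ii`. Since `B₋₁ + B₀ + B₁ = 2τ²(H + K)`, the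
row sums are nonpositive and `B₋₁` is nonnegative off the diagonal; on the diagonal it
dominates `σ_i² - 2τa_i + 2τ²(q_ii - ∫ν_i)`, a quadratic in `τ` that is positive at `0` and
has no root in `(0, τ_i)`. -/

open Set

section Substochastic

variable {n : ℕ} {A B W : Matrix (Fin n) (Fin n) ℝ}

lemma substoch_one : Substoch (1 : Matrix (Fin n) (Fin n) ℝ) := by
  refine ⟨fun i j => ?_, fun i => ?_⟩
  · rw [Matrix.one_apply]; split_ifs <;> norm_num
  · simp [Matrix.one_apply]

lemma Substoch.mul (hA : Substoch A) (hB : Substoch B) : Substoch (A * B) := by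
  refine ⟨fun i j => ?_, fun i => ?_⟩
  · rw [Matrix.mul_apply]
    exact Finset.sum_nonneg fun k _ => mul_nonneg (hA.1 i k) (hB.1 k j)
  · calc ∑ j, (A * B) i j = ∑ k, A i k * ∑ j, B k j := by
          simp_rw [Matrix.mul_apply, Finset.mul_sum]
          exact Finset.sum_comm
      _ ≤ ∑ k, A i k :=
          Finset.sum_le_sum fun k _ => mul_le_of_le_one_right (hA.1 i k) (hB.2 k)
      _ ≤ 1 := hA.2 i

lemma Substoch.pow (hW : Substoch W) (k : ℕ) : Substoch (W ^ k) := by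
  induction k with
  | zero => exact substoch_one
  | succ k ih => rw [pow_succ]; exact ih.mul hW

lemma Substoch.apply_le_one (hW : Substoch W) (i j : Fin n) : W i j ≤ 1 :=
  (Finset.single_le_sum (fun k _ => hW.1 i k) (Finset.mem_univ j)).trans (hW.2 i)

attribute [local instance] Matrix.linftyOpNormedAddCommGroup Matrix.linftyOpNormedRing
  Matrix.linftyOpNormedAlgebra

lemma hasSum_mexp_smul_apply (W : Matrix (Fin n) (Fin n) ℝ) (c : ℝ) (i j : Fin n) :
    HasSum (fun k : ℕ => (k.factorial : ℝ)⁻¹ * (c ^ k * (W ^ k) i j))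
      (mexp (c • W) i j) := by
  have h := NormedSpace.exp_series_hasSum_exp' (𝕂 := ℝ) (c • W)
  replace h := Pi.hasSum.1 (Pi.hasSum.1 h i) j
  simp only [smul_pow, Matrix.smul_apply, smul_eq_mul] at h
  exact h

lemma Substoch.mexp_smul_nonneg (hW : Substoch W) {c : ℝ} (hc : 0 ≤ c) (i j : Fin n) :
    0 ≤ mexp (c • W) i j :=
  (hasSum_mexp_smul_apply W c i j).nonneg fun k => by
    have := (hW.pow k).1 i j
    positivity

lemma Substoch.sum_mexp_smul_le (hW : Substoch W) {c : ℝ} (hc : 0 ≤ c) (i : Fin n) :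
    ∑ j, mexp (c • W) i j ≤ Real.exp c := by
  have hexp : HasSum (fun k : ℕ => (k.factorial : ℝ)⁻¹ * c ^ k) (Real.exp c) := by
    simpa [Real.exp_eq_exp_ℝ, smul_eq_mul] using
      NormedSpace.exp_series_hasSum_exp' (𝕂 := ℝ) c
  refine hasSum_le (fun k => ?_) (hasSum_sum fun j _ => hasSum_mexp_smul_apply W c i j) hexp
  rw [← Finset.mul_sum, ← Finset.mul_sum, ← mul_assoc]
  exact mul_le_of_le_one_right (by positivity) ((hW.pow k).2 i)

lemma mexp_smul_sub_one (W : Matrix (Fin n) (Fin n) ℝ) (c : ℝ) :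
    mexp (c • (W - 1)) = Real.exp (-c) • mexp (c • W) := by
  have hsplit : c • (W - 1) = (-c) • (1 : Matrix (Fin n) (Fin n) ℝ) + c • W := by module
  have hcomm : Commute ((-c) • (1 : Matrix (Fin n) (Fin n) ℝ)) (c • W) :=
    (Commute.one_left (c • W)).smul_left (-c)
  have hscalar : NormedSpace.exp ((-c) • (1 : Matrix (Fin n) (Fin n) ℝ))
      = Real.exp (-c) • (1 : Matrix (Fin n) (Fin n) ℝ) := by
    rw [Matrix.smul_one_eq_diagonal, Matrix.exp_diagonal, Matrix.smul_one_eq_diagonal]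
    congr 1
    ext
    simp [Real.exp_eq_exp_ℝ]
  rw [mexp, mexp, hsplit, Matrix.exp_add_of_commute _ _ hcomm, hscalar, smul_mul_assoc, one_mul]

lemma Substoch.mexp_smul_sub_one (hW : Substoch W) {c : ℝ} (hc : 0 ≤ c) :
    Substoch (mexp (c • (W - 1))) := by
  rw [_root_.mexp_smul_sub_one]
  refine ⟨fun i j => mul_nonneg (Real.exp_nonneg _) (hW.mexp_smul_nonneg hc i j), fun i => ?_⟩
  simp only [Matrix.smul_apply, smul_eq_mul, ← Finset.mul_sum]
  calc Real.exp (-c) * ∑ j, mexp (c • W) i j ≤ Real.exp (-c) * Real.exp c := by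
        gcongr; exact hW.sum_mexp_smul_le hc i
    _ = 1 := by rw [← Real.exp_add, neg_add_cancel, Real.exp_zero]

lemma Substoch.mexp_inv_mul_smul_sub_one (hW : Substoch W) {τ x : ℝ} (hτ : 0 ≤ τ)
    (hx : 0 < x) : Substoch (mexp ((τ⁻¹ * x) • (W - 1))) :=
  hW.mexp_smul_sub_one (mul_nonneg (inv_nonneg.2 hτ) hx.le)

lemma continuous_mexp_mul_smul_apply (G : Matrix (Fin n) (Fin n) ℝ) (c : ℝ) (i j : Fin n) :
    Continuous fun x : ℝ => mexp ((c * x) • G) i j :=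
  (NormedSpace.exp_continuous.comp ((continuous_const_mul c).smul continuous_const)).matrix_elem i j

end Substochastic

section SubGenerator

variable {n : ℕ} {X Y : Matrix (Fin n) (Fin n) ℝ}

lemma IsSubGen.add (hX : IsSubGen X) (hY : IsSubGen Y) : IsSubGen (X + Y) :=
  ⟨fun i j h => add_nonneg (hX.1 i j h) (hY.1 i j h), fun i => by
    simpa only [Matrix.add_apply, Finset.sum_add_distrib] using add_nonpos (hX.2 i) (hY.2 i)⟩

lemma IsSubGen.smul (hY : IsSubGen Y) {c : ℝ} (hc : 0 ≤ c) : IsSubGen (c • Y) :=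
  ⟨fun i j h => mul_nonneg hc (hY.1 i j h), fun i => by
    simpa only [Matrix.smul_apply, smul_eq_mul, ← Finset.mul_sum] using
      mul_nonpos_of_nonneg_of_nonpos hc (hY.2 i)⟩

end SubGenerator

lemma nonneg_of_unique_pos_root {f : ℝ → ℝ} (hf : Continuous f) (h0 : 0 < f 0) {r t : ℝ}
    (hroot : ∀ s > 0, f s = 0 → s = r) (ht : 0 < t) (htr : t < r) : 0 ≤ f t := by
  by_contra! hft
  obtain ⟨s, ⟨hs0, hst⟩, hfs⟩ :=
    intermediate_value_Icc' ht.le hf.continuousOn ⟨hft.le, h0.le⟩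
  have hs : 0 < s := hs0.lt_of_ne (by rintro rfl; exact h0.ne' hfs)
  linarith [hroot s hs hfs]

section SubstochasticFamily

variable {n : ℕ} {E : ℝ → Matrix (Fin n) (Fin n) ℝ} {f : ℝ → ℝ}

lemma integrableOn_mul_apply (hf : IntegrableOn f (Ioi 0))
    (hEc : ∀ i j, Continuous fun x => E x i j) (hE : ∀ x ∈ Ioi (0 : ℝ), Substoch (E x))
    (i j : Fin n) : IntegrableOn (fun x => f x * E x i j) (Ioi 0) :=
  hf.mul_bdd (hEc i j).aestronglyMeasurable <|
    (ae_restrict_iff' measurableSet_Ioi).2 <| .of_forall fun x hx => by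
      rw [Real.norm_eq_abs, abs_le]
      exact ⟨by linarith [(hE x hx).1 i j], (hE x hx).apply_le_one i j⟩

lemma sum_integral_mul_apply_le (hf : IntegrableOn f (Ioi 0))
    (hf0 : ∀ x ∈ Ioi (0 : ℝ), 0 ≤ f x) (hEc : ∀ i j, Continuous fun x => E x i j)
    (hE : ∀ x ∈ Ioi (0 : ℝ), Substoch (E x))
    (i : Fin n) : ∑ j, ∫ x in Ioi 0, f x * E x i j ≤ ∫ x in Ioi 0, f x := by
  have hint := integrableOn_mul_apply hf hEc hE i
  rw [← integral_finsetSum _ fun j _ => hint j]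
  refine setIntegral_mono_on (integrable_finsetSum _ fun j _ => hint j) hf measurableSet_Ioi
    fun x hx => ?_
  rw [← Finset.mul_sum]
  exact mul_le_of_le_one_right (hf0 x hx) ((hE x hx).2 i)

lemma integral_mul_apply_nonneg (hf0 : ∀ x ∈ Ioi (0 : ℝ), 0 ≤ f x)
    (hE : ∀ x ∈ Ioi (0 : ℝ), Substoch (E x)) (i j : Fin n) :
    0 ≤ ∫ x in Ioi 0, f x * E x i j :=
  setIntegral_nonneg measurableSet_Ioi fun x hx => mul_nonneg (hf0 x hx) ((hE x hx).1 i j)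

end SubstochasticFamily

namespace Dat

variable {n : ℕ} {D : Dat n} {E : ℝ → Matrix (Fin n) (Fin n) ℝ}

lemma Good.integrableOn_μ (hD : D.Good) (i k : Fin n) : IntegrableOn (D.μ i k) (Ioi 0) := by
  rcases eq_or_ne i k with rfl | h
  · rw [show D.μ i i = 0 from funext (hD.hμd i)]
    exact integrableOn_zero
  · exact hD.hμi i k h

lemma Good.U0_add_integral_μ (hD : D.Good) (i k : Fin n) :
    D.U0 i k + ∫ x in Ioi (0 : ℝ), D.μ i k x = 1 := by
  rcases eq_or_ne i k with rfl | h
  · simp [hD.hμd, hD.hU0d]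
  · exact hD.hμU i k h

lemma Good.Qμ_nonneg (hD : D.Good) {x : ℝ} (hx : x ∈ Ioi 0) (i k : Fin n) :
    0 ≤ D.Qμ x i k := by
  rcases eq_or_ne i k with rfl | h
  · simp [Qμ, hD.hμd]
  · exact mul_nonneg (hD.hQoff i k h) (hD.hμ0 i k x hx)

lemma Good.integrableOn_Qμ (hD : D.Good) (i k : Fin n) :
    IntegrableOn (fun x => D.Qμ x i k) (Ioi 0) :=
  (hD.integrableOn_μ i k).const_mul (D.Q i k)

lemma intP_Dν_mul_sub_one_apply (hD : D.Good) (hEc : ∀ i j, Continuous fun x => E x i j)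
    (hE : ∀ x ∈ Ioi (0 : ℝ), Substoch (E x)) (i j : Fin n) :
    intP (fun x => D.Dν x * (E x - 1)) i j
      = (∫ x in Ioi 0, D.ν i x * E x i j) - (1 : Matrix (Fin n) (Fin n) ℝ) i j * D.rho i := by
  simp only [intP, Matrix.of_apply, Dν, Matrix.diagonal_mul, Matrix.sub_apply, mul_sub]
  rw [integral_sub (integrableOn_mul_apply (hD.hνi i) hEc hE i j) ((hD.hνi i).mul_const _),
    integral_mul_const, mul_comm, rho]

lemma intP_Qμ_mul_apply (hD : D.Good) (hEc : ∀ i j, Continuous fun x => E x i j)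
    (hE : ∀ x ∈ Ioi (0 : ℝ), Substoch (E x)) (i j : Fin n) :
    intP (fun x => D.Qμ x * E x) i j = ∑ k, ∫ x in Ioi 0, D.Qμ x i k * E x k j := by
  simp only [intP, Matrix.of_apply, Matrix.mul_apply]
  exact integral_finsetSum _ fun k _ => integrableOn_mul_apply (hD.integrableOn_Qμ i k) hEc hE k j

lemma isSubGen_intP_Dν_mul_sub_one (hD : D.Good) (hEc : ∀ i j, Continuous fun x => E x i j)
    (hE : ∀ x ∈ Ioi (0 : ℝ), Substoch (E x)) :
    IsSubGen (intP fun x => D.Dν x * (E x - 1)) := by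
  refine ⟨fun i j h => ?_, fun i => ?_⟩
  · rw [intP_Dν_mul_sub_one_apply hD hEc hE, Matrix.one_apply_ne h, zero_mul, sub_zero]
    exact integral_mul_apply_nonneg (hD.hν0 i) hE i j
  · simp only [intP_Dν_mul_sub_one_apply hD hEc hE, Finset.sum_sub_distrib, ← Finset.sum_mul,
      Matrix.one_apply, Finset.sum_ite_eq, Finset.mem_univ, if_true, one_mul, sub_nonpos]
    exact sum_integral_mul_apply_le (hD.hνi i) (hD.hν0 i) hEc hE i

lemma neg_rho_le_intP_Dν_mul_sub_one_apply_self (hD : D.Good)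
    (hEc : ∀ i j, Continuous fun x => E x i j) (hE : ∀ x ∈ Ioi (0 : ℝ), Substoch (E x))
    (i : Fin n) : -D.rho i ≤ intP (fun x => D.Dν x * (E x - 1)) i i := by
  rw [intP_Dν_mul_sub_one_apply hD hEc hE, Matrix.one_apply_eq, one_mul, neg_le_sub_iff_le_add,
    le_add_iff_nonneg_left]
  exact integral_mul_apply_nonneg (hD.hν0 i) hE i i

lemma isSubGen_hadamard_add_intP_Qμ_mul (hD : D.Good) (hEc : ∀ i j, Continuous fun x => E x i j)
    (hE : ∀ x ∈ Ioi (0 : ℝ), Substoch (E x)) :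
    IsSubGen (D.Q.hadamard D.U0 + intP fun x => D.Qμ x * E x) := by
  refine ⟨fun i j h => ?_, fun i => ?_⟩
  · rw [Matrix.add_apply, Matrix.hadamard_apply, intP_Qμ_mul_apply hD hEc hE]
    exact add_nonneg (mul_nonneg (hD.hQoff i j h) (hD.hU0o i j h).1)
      (Finset.sum_nonneg fun k _ =>
        integral_mul_apply_nonneg (fun x hx => hD.Qμ_nonneg hx i k) hE k j)
  · calc ∑ j, (D.Q.hadamard D.U0 + intP fun x => D.Qμ x * E x) i j
        = ∑ k, (D.Q i k * D.U0 i k + ∑ j, ∫ x in Ioi 0, D.Qμ x i k * E x k j) := by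
          simp only [Matrix.add_apply, Matrix.hadamard_apply, intP_Qμ_mul_apply hD hEc hE,
            Finset.sum_add_distrib]
          rw [Finset.sum_comm]
      _ ≤ ∑ k, (D.Q i k * D.U0 i k + ∫ x in Ioi 0, D.Qμ x i k) :=
          Finset.sum_le_sum fun k _ => add_le_add_right (sum_integral_mul_apply_le
            (hD.integrableOn_Qμ i k) (fun x hx => hD.Qμ_nonneg hx i k) hEc hE k) _
      _ = ∑ k, D.Q i k := by
          refine Finset.sum_congr rfl fun k _ => ?_
          simp only [Qμ, Matrix.of_apply, integral_const_mul, ← mul_add, hD.U0_add_integral_μ,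
            mul_one]
      _ = 0 := hD.hQrow i

lemma Q_le_hadamard_add_intP_Qμ_mul_apply_self (hD : D.Good)
    (hEc : ∀ i j, Continuous fun x => E x i j) (hE : ∀ x ∈ Ioi (0 : ℝ), Substoch (E x))
    (i : Fin n) : D.Q i i ≤ (D.Q.hadamard D.U0 + intP fun x => D.Qμ x * E x) i i := by
  rw [Matrix.add_apply, Matrix.hadamard_apply, intP_Qμ_mul_apply hD hEc hE, hD.hU0d, mul_one,
    le_add_iff_nonneg_right]
  exact Finset.sum_nonneg fun k _ =>
    integral_mul_apply_nonneg (fun x hx => hD.Qμ_nonneg hx i k) hE k i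

variable {τ : ℝ} {W : Matrix (Fin n) (Fin n) ℝ}

lemma isSubGen_H_add_K (hD : D.Good) (hτ : 0 ≤ τ) (hW : Substoch W) :
    IsSubGen (D.H τ W + D.K τ W) :=
  have hEc := continuous_mexp_mul_smul_apply (W - 1) τ⁻¹
  have hE (x : ℝ) (hx : x ∈ Ioi 0) := hW.mexp_inv_mul_smul_sub_one hτ hx
  (isSubGen_intP_Dν_mul_sub_one hD hEc hE).add (isSubGen_hadamard_add_intP_Qμ_mul hD hEc hE)

lemma Q_sub_rho_le_H_add_K_apply_self (hD : D.Good) (hτ : 0 ≤ τ) (hW : Substoch W) (i : Fin n) :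
    D.Q i i - D.rho i ≤ (D.H τ W + D.K τ W) i i := by
  have hEc := continuous_mexp_mul_smul_apply (W - 1) τ⁻¹
  have hE (x : ℝ) (hx : x ∈ Ioi 0) := hW.mexp_inv_mul_smul_sub_one hτ hx
  rw [Matrix.add_apply, sub_eq_neg_add]
  exact add_le_add (neg_rho_le_intP_Dν_mul_sub_one_apply_self hD hEc hE i)
    (Q_le_hadamard_add_intP_Qμ_mul_apply_self hD hEc hE i)

lemma B1_nonneg (i j : Fin n) : 0 ≤ D.B1 i j := by
  rcases eq_or_ne i j with rfl | h
  · simpa [B1, Ds] using sq_nonneg (D.s i)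
  · simp [B1, Ds, Matrix.diagonal_apply_ne _ h]

lemma neg_B0_nonneg (hτ : 0 ≤ τ) (ha : ∀ i, 0 < D.a i → τ < D.s i ^ 2 / D.a i)
    (i j : Fin n) : 0 ≤ (-D.B0 τ) i j := by
  rcases eq_or_ne i j with rfl | h
  · have hdiag : (-D.B0 τ) i i = 2 * (D.s i ^ 2 - τ * D.a i) := by
      simp only [B0, Da, Ds, Matrix.neg_apply, Matrix.sub_apply, Matrix.smul_apply,
        Matrix.diagonal_apply_eq, smul_eq_mul]
      ring
    rw [hdiag]
    rcases le_or_gt (D.a i) 0 with hai | hai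
    · nlinarith [sq_nonneg (D.s i), mul_nonpos_of_nonneg_of_nonpos hτ hai]
    · have := (lt_div_iff₀ hai).1 (ha i hai)
      linarith
  · simp [B0, Da, Ds, Matrix.diagonal_apply_ne _ h]

lemma Bm1_nonneg (hD : D.Good) {troot : Fin n → ℝ} (hτ : D.TauOK troot τ) (hW : Substoch W)
    (i j : Fin n) : 0 ≤ D.Bm1 τ W i j := by
  obtain ⟨hroot, hτ0, -, hτroot⟩ := hτ
  rcases eq_or_ne i j with rfl | h
  · have hquad : 0 ≤ D.s i ^ 2 - 2 * τ * D.a i + 2 * τ ^ 2 * (D.Q i i - D.rho i) :=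
      nonneg_of_unique_pos_root
        (f := fun t => D.s i ^ 2 - 2 * t * D.a i + 2 * t ^ 2 * (D.Q i i - D.rho i))
        (by fun_prop) (by simpa using pow_pos (hD.hs i) 2) (hroot i).2.2 hτ0 (hτroot i)
    have hdiag : D.Bm1 τ W i i
        = D.s i ^ 2 - 2 * τ * D.a i + 2 * τ ^ 2 * (D.H τ W + D.K τ W) i i := by
      simp [Bm1, Ds, Da, mul_add]
    rw [hdiag]
    nlinarith [Q_sub_rho_le_H_add_K_apply_self hD hτ0.le hW i, sq_nonneg τ]
  · have hoff : D.Bm1 τ W i j = 2 * τ ^ 2 * (D.H τ W + D.K τ W) i j := by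
      simp [Bm1, Ds, Da, Matrix.diagonal_apply_ne _ h, mul_add]
    rw [hoff]
    exact mul_nonneg (by positivity) ((isSubGen_H_add_K hD hτ0.le hW).1 i j h)

lemma Bm1_add_B0_add_B1 : D.Bm1 τ W + D.B0 τ + D.B1 = (2 * τ ^ 2) • (D.H τ W + D.K τ W) := by
  simp only [Bm1, B0, B1]
  module

end Dat

/-- Theorem 3 of the paper: sign properties of the coefficients of (QW). -/
theorem stmt2 {n : ℕ} (D : Dat n) (hD : D.Good) (troot : Fin n → ℝ) (τ : ℝ)
    (hτ : D.TauOK troot τ) (W : Matrix (Fin n) (Fin n) ℝ) (hW : Substoch W) :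
    (∀ i j, 0 ≤ D.Bm1 τ W i j) ∧ (∀ i j, 0 ≤ (-(D.B0 τ)) i j) ∧ (∀ i j, 0 ≤ D.B1 i j) ∧
    (∀ i, ∑ j, (D.Bm1 τ W + D.B0 τ + D.B1) i j ≤ 0) := by
  obtain ⟨-, hτ0, hτa, -⟩ := id hτ
  refine ⟨D.Bm1_nonneg hD hτ hW, D.neg_B0_nonneg hτ0.le hτa, D.B1_nonneg, fun i => ?_⟩
  rw [Dat.Bm1_add_B0_add_B1]
  exact ((D.isSubGen_H_add_K hD hτ0.le hW).smul (by positivity)).2 i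
end
end

section
/- Assume 0 < τ < τ*. Define W_0 = 0 and, for k = 0,1,…, let W_{k+1} be the minimal nonnegative solution of the quadratic matrix equation W = B̃_{-1}(τ, W_k) + B̃_1(τ) W² in the unknown W. Then each W_{k+1} exists, the sequence satisfies 0 ≤ W_k ≤ W_{k+1}, each W_k is substochastic, and W_k converges monotonically to W_min, the minimal substochastic solution of equation (QW). -/
open MeasureTheory Matrix Filter

noncomputable section

/-!
For `0 < τ < τ*` the matrix `B₀(τ)` is diagonal with negative entries, so `B̃₁(τ) ≥ 0`, and
`B₋₁(τ, W) ≥ 0` for substochastic `W`: its diagonal is bounded below by the quadratic defining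
`τᵢ`, which is positive between `0` and its root. As `e^{τ⁻¹(W - I)x}` is entrywise nonnegative,
increasing in `W` and substochastic, `B̃₋₁(τ, ·)` is nonnegative, monotone and (by dominated
convergence) continuous on substochastic matrices.

For `C ≥ 0` the iteration `V ↦ C + B̃₁ V²` from `0` increases to the minimal nonnegative solution,
which lies below every nonnegative supersolution; `W_min` is one for `C = B̃₋₁(τ, W_k)` as long as
`W_k ≤ W_min`. Hence `0 ≤ W_k ≤ W_{k+1} ≤ W_min`, and the limit is a substochastic solution of (QW)
below `W_min`, so it is `W_min`.
-/

open Topology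

namespace Matrix

variable {m : Type*} [Fintype m]

lemma mul_apply_nonneg {A B : Matrix m m ℝ} (hA : ∀ i j, 0 ≤ A i j) (hB : ∀ i j, 0 ≤ B i j)
    (i j : m) : 0 ≤ (A * B) i j :=
  Finset.sum_nonneg fun l _ => mul_nonneg (hA i l) (hB l j)

lemma mul_apply_mono {A A' B B' : Matrix m m ℝ} (hA : ∀ i j, 0 ≤ A i j)
    (hB : ∀ i j, 0 ≤ B i j) (hAA' : ∀ i j, A i j ≤ A' i j) (hBB' : ∀ i j, B i j ≤ B' i j)
    (i j : m) : (A * B) i j ≤ (A' * B') i j :=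
  Finset.sum_le_sum fun l _ =>
    mul_le_mul (hAA' i l) (hBB' l j) (hB l j) ((hA i l).trans (hAA' i l))

variable [DecidableEq m]

lemma pow_apply_mono {A B : Matrix m m ℝ} (hA : ∀ i j, 0 ≤ A i j)
    (hAB : ∀ i j, A i j ≤ B i j) (k : ℕ) (i j : m) : (A ^ k) i j ≤ (B ^ k) i j := by
  induction k generalizing i j with
  | zero => rfl
  | succ k ih =>
    rw [pow_succ, pow_succ]
    exact mul_apply_mono (pow_apply_nonneg hA k) hA ih hAB i j

lemma sum_pow_apply_le {A : Matrix m m ℝ} {c : ℝ} (hA : ∀ i j, 0 ≤ A i j) (hc : 0 ≤ c)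
    (hrow : ∀ i, ∑ j, A i j ≤ c) (k : ℕ) (i : m) : ∑ j, (A ^ k) i j ≤ c ^ k := by
  induction k generalizing i with
  | zero => simp [one_apply]
  | succ k ih =>
    calc ∑ j, (A ^ (k + 1)) i j = ∑ l, A i l * ∑ j, (A ^ k) l j := by
          simp only [pow_succ', mul_apply, Finset.mul_sum]
          exact Finset.sum_comm
      _ ≤ ∑ l, A i l * c ^ k :=
          Finset.sum_le_sum fun l _ => mul_le_mul_of_nonneg_left (ih l) (hA i l)
      _ ≤ c * c ^ k := by
          rw [← Finset.sum_mul]; exact mul_le_mul_of_nonneg_right (hrow i) (by positivity)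
      _ = c ^ (k + 1) := (pow_succ' c k).symm

section Exponential

open NormedSpace

attribute [local instance] Matrix.linftyOpNormedAddCommGroup Matrix.linftyOpNormedRing
  Matrix.linftyOpNormedAlgebra

lemma hasSum_exp_apply (A : Matrix m m ℝ) (i j : m) :
    HasSum (fun k : ℕ => (k.factorial : ℝ)⁻¹ * (A ^ k) i j) (exp A i j) :=
  Pi.hasSum.mp (Pi.hasSum.mp (exp_series_hasSum_exp' (𝕂 := ℝ) A) i) j

lemma continuous_exp : Continuous (exp : Matrix m m ℝ → Matrix m m ℝ) :=
  exp_continuous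

lemma exp_apply_nonneg {A : Matrix m m ℝ} (hA : ∀ i j, 0 ≤ A i j) (i j : m) :
    0 ≤ exp A i j :=
  (hasSum_exp_apply A i j).nonneg fun k => mul_nonneg (by positivity) (pow_apply_nonneg hA k i j)

lemma exp_apply_mono {A B : Matrix m m ℝ} (hA : ∀ i j, 0 ≤ A i j)
    (hAB : ∀ i j, A i j ≤ B i j) (i j : m) : exp A i j ≤ exp B i j :=
  hasSum_le (fun k => mul_le_mul_of_nonneg_left (pow_apply_mono hA hAB k i j) (by positivity))
    (hasSum_exp_apply A i j) (hasSum_exp_apply B i j)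

lemma sum_exp_apply_le {A : Matrix m m ℝ} {c : ℝ} (hA : ∀ i j, 0 ≤ A i j) (hc : 0 ≤ c)
    (hrow : ∀ i, ∑ j, A i j ≤ c) (i : m) : ∑ j, exp A i j ≤ Real.exp c := by
  have hc_sum : HasSum (fun k : ℕ => (k.factorial : ℝ)⁻¹ * c ^ k) (Real.exp c) := by
    simpa [Real.exp_eq_exp_ℝ] using exp_series_hasSum_exp' (𝕂 := ℝ) c
  refine hasSum_le (fun k => ?_) (hasSum_sum fun j _ => hasSum_exp_apply A i j) hc_sum
  rw [← Finset.mul_sum]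
  exact mul_le_mul_of_nonneg_left (sum_pow_apply_le hA hc hrow k i) (by positivity)

lemma exp_smul_sub_one (t : ℝ) (W : Matrix m m ℝ) :
    exp (t • (W - 1)) = Real.exp (-t) • exp (t • W) := by
  have hsplit : t • (W - 1) = t • W + algebraMap ℝ (Matrix m m ℝ) (-t) := by
    rw [Algebra.algebraMap_eq_smul_one]; module
  rw [hsplit, exp_add_of_commute _ _ (Algebra.commute_algebraMap_right _ _)]
  erw [← algebraMap_exp_comm]
  rw [← Real.exp_eq_exp_ℝ, Algebra.algebraMap_eq_smul_one, mul_smul_one]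

variable {t : ℝ} {W W' : Matrix m m ℝ}

lemma exp_smul_sub_one_apply_nonneg (ht : 0 ≤ t) (hW : ∀ i j, 0 ≤ W i j) (i j : m) :
    0 ≤ exp (t • (W - 1)) i j := by
  rw [exp_smul_sub_one, smul_apply, smul_eq_mul]
  exact mul_nonneg (Real.exp_nonneg _)
    (exp_apply_nonneg (fun i j => mul_nonneg ht (hW i j)) i j)

lemma exp_smul_sub_one_apply_mono (ht : 0 ≤ t) (hW : ∀ i j, 0 ≤ W i j)
    (hWW' : ∀ i j, W i j ≤ W' i j) (i j : m) :
    exp (t • (W - 1)) i j ≤ exp (t • (W' - 1)) i j := by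
  simp only [exp_smul_sub_one, smul_apply, smul_eq_mul]
  exact mul_le_mul_of_nonneg_left (exp_apply_mono (fun i j => mul_nonneg ht (hW i j))
    (fun i j => mul_le_mul_of_nonneg_left (hWW' i j) ht) i j) (Real.exp_nonneg _)

lemma sum_exp_smul_sub_one_apply_le_one (ht : 0 ≤ t) (hW : ∀ i j, 0 ≤ W i j)
    (hrow : ∀ i, ∑ j, W i j ≤ 1) (i : m) : ∑ j, exp (t • (W - 1)) i j ≤ 1 := by
  have hrow_t : ∀ i, ∑ j, (t • W) i j ≤ t := fun i => by
    simpa [← Finset.mul_sum] using mul_le_mul_of_nonneg_left (hrow i) ht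
  calc ∑ j, exp (t • (W - 1)) i j = Real.exp (-t) * ∑ j, exp (t • W) i j := by
        simp [exp_smul_sub_one, Finset.mul_sum]
    _ ≤ Real.exp (-t) * Real.exp t := mul_le_mul_of_nonneg_left
        (sum_exp_apply_le (fun i j => mul_nonneg ht (hW i j)) ht hrow_t i) (Real.exp_nonneg _)
    _ = 1 := by rw [← Real.exp_add, neg_add_cancel, Real.exp_zero]

lemma abs_exp_smul_sub_one_apply_le_one (ht : 0 ≤ t) (hW : ∀ i j, 0 ≤ W i j)
    (hrow : ∀ i, ∑ j, W i j ≤ 1) (i j : m) : |exp (t • (W - 1)) i j| ≤ 1 := by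
  have h0 := exp_smul_sub_one_apply_nonneg ht hW
  rw [abs_of_nonneg (h0 i j)]
  exact (Finset.single_le_sum (fun l _ => h0 i l) (Finset.mem_univ j)).trans
    (sum_exp_smul_sub_one_apply_le_one ht hW hrow i)

lemma abs_exp_smul_sub_one_sub_one_apply_le_one (ht : 0 ≤ t) (hW : ∀ i j, 0 ≤ W i j)
    (hrow : ∀ i, ∑ j, W i j ≤ 1) (i j : m) : |(exp (t • (W - 1)) - 1) i j| ≤ 1 := by
  have h0 := exp_smul_sub_one_apply_nonneg ht hW i j
  have h1 := (abs_le.mp (abs_exp_smul_sub_one_apply_le_one ht hW hrow i j)).2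
  rw [Matrix.sub_apply, one_apply, abs_le]
  split_ifs <;> constructor <;> linarith

end Exponential

lemma quadratic_eq_zero_iff {A B C X : Matrix m m ℝ} (hB : IsUnit B.det) :
    A * (X * X) + B * X + C = 0 ↔ X = -B⁻¹ * C + -B⁻¹ * A * (X * X) := by
  have hrhs : -B⁻¹ * C + -B⁻¹ * A * (X * X) = B⁻¹ * (-(A * (X * X)) - C) := by noncomm_ring
  rw [hrhs]
  constructor
  · intro h
    have hBX : B * X = -(A * (X * X)) - C := by
      rw [← sub_eq_zero, ← h]; abel
    rw [← hBX, nonsing_inv_mul_cancel_left B X hB]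
  · intro h
    have hBX : B * X = -(A * (X * X)) - C := by
      conv_lhs => rw [h]
      exact mul_nonsing_inv_cancel_left B _ hB
    rw [hBX]; abel

end Matrix

lemma tendsto_integral_mul_of_norm_le_one {α : Type*} [MeasurableSpace α] {μ : Measure α}
    {f : α → ℝ} {g : ℕ → α → ℝ} {g₀ : α → ℝ} (hf : Integrable f μ)
    (hg : ∀ k, AEStronglyMeasurable (g k) μ) (hg_le : ∀ k, ∀ᵐ x ∂μ, ‖g k x‖ ≤ 1)
    (hg_lim : ∀ᵐ x ∂μ, Tendsto (fun k => g k x) atTop (𝓝 (g₀ x))) :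
    Tendsto (fun k => ∫ x, f x * g k x ∂μ) atTop (𝓝 (∫ x, f x * g₀ x ∂μ)) := by
  refine tendsto_integral_of_dominated_convergence (fun x => ‖f x‖)
    (fun k => hf.aestronglyMeasurable.mul (hg k)) hf.norm (fun k => ?_) ?_
  · filter_upwards [hg_le k] with x hx
    rw [norm_mul]
    exact mul_le_of_le_one_right (norm_nonneg _) hx
  · filter_upwards [hg_lim] with x hx
    exact hx.const_mul (f x)

section QuadraticIteration

variable {m : Type*} [Fintype m] {T C C' M V : Matrix m m ℝ}

def quadIter (T C : Matrix m m ℝ) : ℕ → Matrix m m ℝ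
  | 0 => 0
  | k + 1 => C + T * (quadIter T C k * quadIter T C k)

/-- Only meaningful when `V = C + T V²` has a nonnegative supersolution: the supremum of an
unbounded family of reals is `0`. -/
noncomputable def quadMinSol (T C : Matrix m m ℝ) : Matrix m m ℝ :=
  of fun i j => ⨆ k, quadIter T C k i j

lemma quadStep_apply_mono {V' : Matrix m m ℝ} (hT : ∀ i j, 0 ≤ T i j)
    (hCC' : ∀ i j, C i j ≤ C' i j) (hV : ∀ i j, 0 ≤ V i j) (hVV' : ∀ i j, V i j ≤ V' i j)
    (i j : m) : (C + T * (V * V)) i j ≤ (C' + T * (V' * V')) i j :=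
  add_le_add (hCC' i j) (mul_apply_mono hT (mul_apply_nonneg hV hV) (fun _ _ => le_rfl)
    (mul_apply_mono hV hV hVV' hVV') i j)

variable (hT : ∀ i j, 0 ≤ T i j) (hC : ∀ i j, 0 ≤ C i j)
include hT hC

lemma quadIter_nonneg (k : ℕ) (i j : m) : 0 ≤ quadIter T C k i j := by
  induction k generalizing i j with
  | zero => exact le_rfl
  | succ k ih => exact add_nonneg (hC i j) (mul_apply_nonneg hT (mul_apply_nonneg ih ih) i j)

lemma quadIter_le_succ (k : ℕ) (i j : m) : quadIter T C k i j ≤ quadIter T C (k + 1) i j := by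
  induction k generalizing i j with
  | zero => exact quadIter_nonneg hT hC 1 i j
  | succ k ih => exact quadStep_apply_mono hT (fun _ _ => le_rfl) (quadIter_nonneg hT hC k) ih i j

variable (hM : ∀ i j, 0 ≤ M i j) (hsup : ∀ i j, (C + T * (M * M)) i j ≤ M i j)
include hM hsup

lemma quadIter_le (k : ℕ) (i j : m) : quadIter T C k i j ≤ M i j := by
  induction k generalizing i j with
  | zero => exact hM i j
  | succ k ih =>
    exact (quadStep_apply_mono hT (fun _ _ => le_rfl) (quadIter_nonneg hT hC k) ih i j).trans
      (hsup i j)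

lemma tendsto_quadIter : Tendsto (quadIter T C) atTop (𝓝 (quadMinSol T C)) :=
  tendsto_pi_nhds.mpr fun i => tendsto_pi_nhds.mpr fun j =>
    tendsto_atTop_ciSup (monotone_nat_of_le_succ fun k => quadIter_le_succ hT hC k i j)
      ⟨M i j, Set.forall_mem_range.mpr fun k => quadIter_le hT hC hM hsup k i j⟩

lemma quadMinSol_le (i j : m) : quadMinSol T C i j ≤ M i j :=
  le_of_tendsto' (((tendsto_quadIter hT hC hM hsup).apply_nhds i).apply_nhds j)
    fun k => quadIter_le hT hC hM hsup k i j

lemma quadMinSol_nonneg (i j : m) : 0 ≤ quadMinSol T C i j :=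
  ge_of_tendsto' (((tendsto_quadIter hT hC hM hsup).apply_nhds i).apply_nhds j)
    fun k => quadIter_nonneg hT hC k i j

lemma quadMinSol_eq : quadMinSol T C = C + T * (quadMinSol T C * quadMinSol T C) := by
  have hlim := tendsto_quadIter hT hC hM hsup
  refine tendsto_nhds_unique (hlim.comp (tendsto_add_atTop_nat 1)) ?_
  have hstep : Continuous fun V : Matrix m m ℝ => C + T * (V * V) := by fun_prop
  exact (hstep.tendsto _).comp hlim

omit hM hsup in
lemma quadMinSol_le_of_eq (hV : ∀ i j, 0 ≤ V i j) (hVeq : V = C + T * (V * V)) (i j : m) :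
    quadMinSol T C i j ≤ V i j :=
  quadMinSol_le hT hC hV (fun i j => by rw [← hVeq]) i j

omit hM hsup in
lemma quadMinSol_mono (hCC' : ∀ i j, C i j ≤ C' i j) (hM : ∀ i j, 0 ≤ M i j)
    (hsup : ∀ i j, (C' + T * (M * M)) i j ≤ M i j) (i j : m) :
    quadMinSol T C i j ≤ quadMinSol T C' i j := by
  have hC' : ∀ i j, 0 ≤ C' i j := fun i j => (hC i j).trans (hCC' i j)
  have hL' := quadMinSol_nonneg hT hC' hM hsup
  refine quadMinSol_le hT hC hL' (fun i j => ?_) i j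
  conv_rhs => rw [quadMinSol_eq hT hC' hM hsup]
  exact quadStep_apply_mono hT hCC' hL' (fun _ _ => le_rfl) i j

end QuadraticIteration

section NestedIteration

variable {m : Type*} [Fintype m] {T S : Matrix m m ℝ} {Φ : Matrix m m ℝ → Matrix m m ℝ}

noncomputable def nestedIter (T : Matrix m m ℝ) (Φ : Matrix m m ℝ → Matrix m m ℝ) :
    ℕ → Matrix m m ℝ
  | 0 => 0
  | k + 1 => quadMinSol T (Φ (nestedIter T Φ k))

structure MonotoneQuadSol (T : Matrix m m ℝ) (Φ : Matrix m m ℝ → Matrix m m ℝ)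
    (S : Matrix m m ℝ) : Prop where
  T_nonneg : ∀ i j, 0 ≤ T i j
  S_nonneg : ∀ i j, 0 ≤ S i j
  S_eq : S = Φ S + T * (S * S)
  Φ_nonneg : ∀ W, (∀ i j, 0 ≤ W i j) → (∀ i j, W i j ≤ S i j) → ∀ i j, 0 ≤ Φ W i j
  Φ_mono : ∀ W W', (∀ i j, 0 ≤ W i j) → (∀ i j, W i j ≤ W' i j) → (∀ i j, W' i j ≤ S i j) →
    ∀ i j, Φ W i j ≤ Φ W' i j

namespace MonotoneQuadSol

variable (h : MonotoneQuadSol T Φ S)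
include h

lemma supersolution {W : Matrix m m ℝ} (hW : ∀ i j, 0 ≤ W i j) (hWS : ∀ i j, W i j ≤ S i j)
    (i j : m) : (Φ W + T * (S * S)) i j ≤ S i j := by
  conv_rhs => rw [h.S_eq]
  exact quadStep_apply_mono h.T_nonneg (h.Φ_mono W S hW hWS fun _ _ => le_rfl) h.S_nonneg
    (fun _ _ => le_rfl) i j

lemma nestedIter_nonneg_le (k : ℕ) :
    (∀ i j, 0 ≤ nestedIter T Φ k i j) ∧ ∀ i j, nestedIter T Φ k i j ≤ S i j := by
  induction k with
  | zero => exact ⟨fun _ _ => le_rfl, h.S_nonneg⟩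
  | succ k ih =>
    have hsup := h.supersolution ih.1 ih.2
    have hC := h.Φ_nonneg _ ih.1 ih.2
    exact ⟨quadMinSol_nonneg h.T_nonneg hC h.S_nonneg hsup,
      quadMinSol_le h.T_nonneg hC h.S_nonneg hsup⟩

lemma nestedIter_succ_eq (k : ℕ) :
    nestedIter T Φ (k + 1) = Φ (nestedIter T Φ k)
      + T * (nestedIter T Φ (k + 1) * nestedIter T Φ (k + 1)) := by
  obtain ⟨h0, hle⟩ := h.nestedIter_nonneg_le k
  exact quadMinSol_eq h.T_nonneg (h.Φ_nonneg _ h0 hle) h.S_nonneg (h.supersolution h0 hle)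

lemma nestedIter_succ_le_of_eq (k : ℕ) {V : Matrix m m ℝ} (hV : ∀ i j, 0 ≤ V i j)
    (hVeq : V = Φ (nestedIter T Φ k) + T * (V * V)) (i j : m) :
    nestedIter T Φ (k + 1) i j ≤ V i j := by
  obtain ⟨h0, hle⟩ := h.nestedIter_nonneg_le k
  exact quadMinSol_le_of_eq h.T_nonneg (h.Φ_nonneg _ h0 hle) hV hVeq i j

lemma nestedIter_le_succ (k : ℕ) (i j : m) :
    nestedIter T Φ k i j ≤ nestedIter T Φ (k + 1) i j := by
  have hbox := h.nestedIter_nonneg_le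
  induction k generalizing i j with
  | zero => exact (hbox 1).1 i j
  | succ k ih =>
    exact quadMinSol_mono h.T_nonneg (h.Φ_nonneg _ (hbox k).1 (hbox k).2)
      (h.Φ_mono _ _ (hbox k).1 ih (hbox (k + 1)).2) h.S_nonneg
      (h.supersolution (hbox (k + 1)).1 (hbox (k + 1)).2) i j

lemma tendsto_nestedIter
    (hΦ_lim : ∀ (g : ℕ → Matrix m m ℝ) (L : Matrix m m ℝ), (∀ k i j, 0 ≤ g k i j) →
      (∀ k i j, g k i j ≤ S i j) → Tendsto g atTop (𝓝 L) → Tendsto (Φ ∘ g) atTop (𝓝 (Φ L)))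
    (hS_min : ∀ L : Matrix m m ℝ, (∀ i j, 0 ≤ L i j) → (∀ i j, L i j ≤ S i j) →
      L = Φ L + T * (L * L) → ∀ i j, S i j ≤ L i j) :
    Tendsto (nestedIter T Φ) atTop (𝓝 S) := by
  set W := nestedIter T Φ
  have hbox := h.nestedIter_nonneg_le
  set L : Matrix m m ℝ := of fun i j => ⨆ k, W k i j
  have hlim : Tendsto W atTop (𝓝 L) :=
    tendsto_pi_nhds.mpr fun i => tendsto_pi_nhds.mpr fun j =>
      tendsto_atTop_ciSup (monotone_nat_of_le_succ fun k => h.nestedIter_le_succ k i j)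
        ⟨S i j, Set.forall_mem_range.mpr fun k => (hbox k).2 i j⟩
  have hlim_apply i j := (hlim.apply_nhds i).apply_nhds j
  have hL0 : ∀ i j, 0 ≤ L i j := fun i j =>
    ge_of_tendsto' (hlim_apply i j) fun k => (hbox k).1 i j
  have hLS : ∀ i j, L i j ≤ S i j := fun i j =>
    le_of_tendsto' (hlim_apply i j) fun k => (hbox k).2 i j
  have hLeq : L = Φ L + T * (L * L) := by
    have hshift := hlim.comp (tendsto_add_atTop_nat 1)
    have hquad : Continuous fun V : Matrix m m ℝ => T * (V * V) := by fun_prop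
    have hrhs := (hΦ_lim W L (fun k => (hbox k).1) (fun k => (hbox k).2) hlim).add
      ((hquad.tendsto L).comp hshift)
    exact tendsto_nhds_unique hshift (hrhs.congr fun k => (h.nestedIter_succ_eq k).symm)
  have hLS_eq : L = S := ext fun i j => (hLS i j).antisymm (hS_min L hL0 hLS hLeq i j)
  rwa [← hLS_eq]

end MonotoneQuadSol

end NestedIteration

lemma Substoch.of_le {n : ℕ} {S W : Matrix (Fin n) (Fin n) ℝ} (hS : Substoch S)
    (hW : ∀ i j, 0 ≤ W i j) (hWS : ∀ i j, W i j ≤ S i j) : Substoch W :=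
  ⟨hW, fun i => (Finset.sum_le_sum fun j _ => hWS i j).trans (hS.2 i)⟩

lemma Substoch.of_tendsto {n : ℕ} {g : ℕ → Matrix (Fin n) (Fin n) ℝ} {L : Matrix (Fin n) (Fin n) ℝ}
    (hg : ∀ k, Substoch (g k)) (hlim : Tendsto g atTop (𝓝 L)) : Substoch L := by
  have hlim_apply i j := (hlim.apply_nhds i).apply_nhds j
  refine ⟨fun i j => ge_of_tendsto' (hlim_apply i j) fun k => (hg k).1 i j, fun i => ?_⟩
  exact le_of_tendsto' (tendsto_finsetSum _ fun j _ => hlim_apply i j) fun k => (hg k).2 i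

section Kernel

variable {n : ℕ} {τ : ℝ} {W : Matrix (Fin n) (Fin n) ℝ}

lemma continuous_mexp_apply (τ : ℝ) (W : Matrix (Fin n) (Fin n) ℝ) (i j : Fin n) :
    Continuous fun x : ℝ => mexp ((τ⁻¹ * x) • (W - 1)) i j :=
  (continuous_exp.comp ((continuous_const.mul continuous_id).smul continuous_const)).matrix_elem i j

lemma tendsto_mexp_apply {g : ℕ → Matrix (Fin n) (Fin n) ℝ} {L : Matrix (Fin n) (Fin n) ℝ}
    (hg : Tendsto g atTop (𝓝 L)) (τ x : ℝ) (i j : Fin n) :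
    Tendsto (fun k => mexp ((τ⁻¹ * x) • (g k - 1)) i j) atTop
      (𝓝 (mexp ((τ⁻¹ * x) • (L - 1)) i j)) :=
  (((continuous_exp.tendsto _).comp ((hg.sub_const 1).const_smul _)).apply_nhds i).apply_nhds j

variable (hτ : 0 < τ) (hW : Substoch W)
include hτ hW

lemma ae_norm_mexp_apply_le_one (i j : Fin n) :
    ∀ᵐ x ∂volume.restrict (Set.Ioi (0:ℝ)), ‖mexp ((τ⁻¹ * x) • (W - 1)) i j‖ ≤ 1 :=
  ae_restrict_of_forall_mem measurableSet_Ioi fun _ hx =>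
    abs_exp_smul_sub_one_apply_le_one (mul_nonneg (inv_nonneg.mpr hτ.le) (le_of_lt hx))
      hW.1 hW.2 i j

lemma ae_norm_mexp_sub_one_apply_le_one (i j : Fin n) :
    ∀ᵐ x ∂volume.restrict (Set.Ioi (0:ℝ)), ‖(mexp ((τ⁻¹ * x) • (W - 1)) - 1) i j‖ ≤ 1 :=
  ae_restrict_of_forall_mem measurableSet_Ioi fun _ hx =>
    abs_exp_smul_sub_one_sub_one_apply_le_one (mul_nonneg (inv_nonneg.mpr hτ.le) (le_of_lt hx))
      hW.1 hW.2 i j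

end Kernel

namespace Dat

variable {n : ℕ} {D : Dat n} {τ : ℝ} {troot : Fin n → ℝ} {W W' : Matrix (Fin n) (Fin n) ℝ}

lemma H_apply (τ : ℝ) (W : Matrix (Fin n) (Fin n) ℝ) (i j : Fin n) :
    D.H τ W i j = ∫ x in Set.Ioi 0, D.ν i x * (mexp ((τ⁻¹ * x) • (W - 1)) - 1) i j := by
  simp only [H, intP, of_apply, Dν, diagonal_mul]

lemma Bm1_apply (τ : ℝ) (W : Matrix (Fin n) (Fin n) ℝ) (i j : Fin n) :
    D.Bm1 τ W i j = D.Ds i j - 2 * τ * D.Da i j + 2 * τ ^ 2 * (D.H τ W i j + D.K τ W i j) := by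
  simp [Bm1, mul_add]

lemma B0_eq_diagonal (τ : ℝ) :
    D.B0 τ = diagonal fun i => -(2 * D.s i ^ 2 - 2 * τ * D.a i) := by
  ext i j
  rcases eq_or_ne i j with rfl | hij
  · simp [B0, Da, Ds]
  · simp [B0, Da, Ds, hij]

section Good

variable (hD : D.Good)
include hD

lemma Good.Q_apply_self_nonpos (i : Fin n) : D.Q i i ≤ 0 := by
  have hrow := hD.hQrow i
  rw [← Finset.add_sum_erase _ _ (Finset.mem_univ i)] at hrow
  have hoff : 0 ≤ ∑ j ∈ Finset.univ.erase i, D.Q i j :=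
    Finset.sum_nonneg fun j hj => hD.hQoff i j (Finset.ne_of_mem_erase hj).symm
  linarith

lemma Good.rho_nonneg (i : Fin n) : 0 ≤ D.rho i :=
  setIntegral_nonneg measurableSet_Ioi (hD.hν0 i)

lemma Good.Qμ_apply_nonneg (i l : Fin n) {x : ℝ} (hx : x ∈ Set.Ioi 0) :
    0 ≤ D.Q i l * D.μ i l x := by
  rcases eq_or_ne i l with rfl | hil
  · rw [hD.hμd]; simp
  · exact mul_nonneg (hD.hQoff i l hil) (hD.hμ0 i l x hx)

lemma Good.integrableOn_Qμ_apply (i l : Fin n) :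
    IntegrableOn (fun x => D.Q i l * D.μ i l x) (Set.Ioi 0) := by
  rcases eq_or_ne i l with rfl | hil
  · simp only [hD.hμd, mul_zero]; exact integrableOn_zero
  · exact (hD.hμi i l hil).const_mul _

variable (hτ : 0 < τ)
include hτ

lemma Good.integrableOn_H_integrand (hW : Substoch W) (i j : Fin n) :
    IntegrableOn (fun x => D.ν i x * (mexp ((τ⁻¹ * x) • (W - 1)) - 1) i j) (Set.Ioi 0) :=
  (hD.hνi i).mul_bdd ((continuous_mexp_apply τ W i j).sub continuous_const).aestronglyMeasurable
    (ae_norm_mexp_sub_one_apply_le_one hτ hW i j)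

lemma Good.integrableOn_K_integrand (hW : Substoch W) (i l j : Fin n) :
    IntegrableOn (fun x => D.Q i l * D.μ i l x * mexp ((τ⁻¹ * x) • (W - 1)) l j) (Set.Ioi 0) :=
  (hD.integrableOn_Qμ_apply i l).mul_bdd (continuous_mexp_apply τ W l j).aestronglyMeasurable
    (ae_norm_mexp_apply_le_one hτ hW l j)

lemma Good.K_apply (hW : Substoch W) (i j : Fin n) :
    D.K τ W i j = D.Q i j * D.U0 i j
      + ∑ l, ∫ x in Set.Ioi 0, D.Q i l * D.μ i l x * mexp ((τ⁻¹ * x) • (W - 1)) l j := by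
  simp only [K, intP, Matrix.add_apply, of_apply, hadamard_apply, Qμ, mul_apply]
  rw [integral_finsetSum _ fun l _ => hD.integrableOn_K_integrand hτ hW i l j]

lemma Good.H_apply_mono (hW : Substoch W) (hW' : Substoch W') (hWW' : ∀ i j, W i j ≤ W' i j)
    (i j : Fin n) : D.H τ W i j ≤ D.H τ W' i j := by
  rw [H_apply, H_apply]
  refine setIntegral_mono_on (hD.integrableOn_H_integrand hτ hW i j)
    (hD.integrableOn_H_integrand hτ hW' i j) measurableSet_Ioi fun x (hx : 0 < x) => ?_
  refine mul_le_mul_of_nonneg_left (sub_le_sub_right ?_ _) (hD.hν0 i x hx)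
  exact exp_smul_sub_one_apply_mono (by positivity) hW.1 hWW' i j

lemma Good.K_apply_mono (hW : Substoch W) (hW' : Substoch W') (hWW' : ∀ i j, W i j ≤ W' i j)
    (i j : Fin n) : D.K τ W i j ≤ D.K τ W' i j := by
  rw [hD.K_apply hτ hW, hD.K_apply hτ hW']
  refine add_le_add le_rfl (Finset.sum_le_sum fun l _ => ?_)
  refine setIntegral_mono_on (hD.integrableOn_K_integrand hτ hW i l j)
    (hD.integrableOn_K_integrand hτ hW' i l j) measurableSet_Ioi fun x (hx : 0 < x) => ?_
  refine mul_le_mul_of_nonneg_left ?_ (hD.Qμ_apply_nonneg i l hx)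
  exact exp_smul_sub_one_apply_mono (by positivity) hW.1 hWW' l j

lemma Good.H_apply_nonneg_of_ne (hW : Substoch W) {i j : Fin n} (hij : i ≠ j) :
    0 ≤ D.H τ W i j := by
  rw [H_apply]
  refine setIntegral_nonneg measurableSet_Ioi fun x (hx : 0 < x) => mul_nonneg (hD.hν0 i x hx) ?_
  rw [Matrix.sub_apply, one_apply_ne hij, sub_zero]
  exact exp_smul_sub_one_apply_nonneg (by positivity) hW.1 i j

lemma Good.neg_rho_le_H_apply_self (hW : Substoch W) (i : Fin n) : -D.rho i ≤ D.H τ W i i := by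
  rw [H_apply, rho, ← integral_neg]
  refine setIntegral_mono_on (hD.hνi i).neg (hD.integrableOn_H_integrand hτ hW i i)
    measurableSet_Ioi fun x (hx : 0 < x) => ?_
  have hE : 0 ≤ mexp ((τ⁻¹ * x) • (W - 1)) i i :=
    exp_smul_sub_one_apply_nonneg (by positivity) hW.1 i i
  rw [Matrix.sub_apply, one_apply_eq]
  nlinarith [hD.hν0 i x hx]

lemma Good.mul_U0_le_K_apply (hW : Substoch W) (i j : Fin n) :
    D.Q i j * D.U0 i j ≤ D.K τ W i j := by
  rw [hD.K_apply hτ hW]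
  refine le_add_of_nonneg_right (Finset.sum_nonneg fun l _ => ?_)
  refine setIntegral_nonneg measurableSet_Ioi fun x (hx : 0 < x) => ?_
  exact mul_nonneg (hD.Qμ_apply_nonneg i l hx)
    (exp_smul_sub_one_apply_nonneg (by positivity) hW.1 l j)

lemma Good.tendsto_H_apply {g : ℕ → Matrix (Fin n) (Fin n) ℝ} {L : Matrix (Fin n) (Fin n) ℝ}
    (hg : ∀ k, Substoch (g k)) (hlim : Tendsto g atTop (𝓝 L)) (i j : Fin n) :
    Tendsto (fun k => D.H τ (g k) i j) atTop (𝓝 (D.H τ L i j)) := by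
  simp only [H_apply]
  exact tendsto_integral_mul_of_norm_le_one (hD.hνi i)
    (fun k => ((continuous_mexp_apply τ (g k) i j).sub continuous_const).aestronglyMeasurable)
    (fun k => ae_norm_mexp_sub_one_apply_le_one hτ (hg k) i j)
    (ae_of_all _ fun x => (tendsto_mexp_apply hlim τ x i j).sub_const _)

lemma Good.tendsto_K_apply {g : ℕ → Matrix (Fin n) (Fin n) ℝ} {L : Matrix (Fin n) (Fin n) ℝ}
    (hg : ∀ k, Substoch (g k)) (hlim : Tendsto g atTop (𝓝 L)) (i j : Fin n) :
    Tendsto (fun k => D.K τ (g k) i j) atTop (𝓝 (D.K τ L i j)) := by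
  rw [hD.K_apply hτ (Substoch.of_tendsto hg hlim)]
  refine Tendsto.congr (fun k => (hD.K_apply hτ (hg k) i j).symm) ?_
  refine tendsto_const_nhds.add (tendsto_finsetSum _ fun l _ => ?_)
  exact tendsto_integral_mul_of_norm_le_one (hD.integrableOn_Qμ_apply i l)
    (fun k => (continuous_mexp_apply τ (g k) l j).aestronglyMeasurable)
    (fun k => ae_norm_mexp_apply_le_one hτ (hg k) l j)
    (ae_of_all _ fun x => tendsto_mexp_apply hlim τ x l j)

lemma Good.Bm1_apply_mono (hW : Substoch W) (hW' : Substoch W') (hWW' : ∀ i j, W i j ≤ W' i j)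
    (i j : Fin n) : D.Bm1 τ W i j ≤ D.Bm1 τ W' i j := by
  rw [Bm1_apply, Bm1_apply]
  gcongr
  exacts [hD.H_apply_mono hτ hW hW' hWW' i j, hD.K_apply_mono hτ hW hW' hWW' i j]

lemma Good.tendsto_Bm1_apply {g : ℕ → Matrix (Fin n) (Fin n) ℝ} {L : Matrix (Fin n) (Fin n) ℝ}
    (hg : ∀ k, Substoch (g k)) (hlim : Tendsto g atTop (𝓝 L)) (i j : Fin n) :
    Tendsto (fun k => D.Bm1 τ (g k) i j) atTop (𝓝 (D.Bm1 τ L i j)) := by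
  simp only [Bm1_apply]
  exact tendsto_const_nhds.add
    (((hD.tendsto_H_apply hτ hg hlim i j).add (hD.tendsto_K_apply hτ hg hlim i j)).const_mul _)

end Good

lemma TauOK.pos (hτ : D.TauOK troot τ) : 0 < τ := hτ.2.1

lemma TauOK.mul_a_lt_sq (hτ : D.TauOK troot τ) (hD : D.Good) (i : Fin n) :
    τ * D.a i < D.s i ^ 2 := by
  rcases le_or_gt (D.a i) 0 with ha | ha
  · nlinarith [hD.hs i, hτ.pos]
  · exact (lt_div_iff₀ ha).mp (hτ.2.2.1 i ha)

lemma TauOK.quadratic_pos (hτ : D.TauOK troot τ) (hD : D.Good) (i : Fin n) :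
    0 < D.s i ^ 2 - 2 * τ * D.a i + 2 * τ ^ 2 * (D.Q i i - D.rho i) := by
  obtain ⟨hr, hroot, -⟩ := hτ.1 i
  rw [← rho] at hroot
  have hc : D.Q i i - D.rho i ≤ 0 := by linarith [hD.Q_apply_self_nonpos i, hD.rho_nonneg i]
  have hτr : τ < troot i := hτ.2.2.2 i
  -- concavity of the quadratic between `0` and its positive root `troot i`
  have hconc : troot i * (D.s i ^ 2 - 2 * τ * D.a i + 2 * τ ^ 2 * (D.Q i i - D.rho i))
      = (troot i - τ) * (D.s i ^ 2 - 2 * τ * troot i * (D.Q i i - D.rho i)) := by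
    linear_combination τ * hroot
  have hpos : 0 < D.s i ^ 2 - 2 * τ * troot i * (D.Q i i - D.rho i) := by
    nlinarith [hD.hs i, mul_nonneg (mul_nonneg hτ.pos.le hr.le) (neg_nonneg.mpr hc)]
  exact pos_of_mul_pos_right (hconc ▸ mul_pos (sub_pos.mpr hτr) hpos) hr.le

lemma Good.Bm1_apply_nonneg (hD : D.Good) (hτ : D.TauOK troot τ) (hW : Substoch W)
    (i j : Fin n) : 0 ≤ D.Bm1 τ W i j := by
  have hτ0 := hτ.pos
  have hK := hD.mul_U0_le_K_apply hτ0 hW i j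
  rw [Bm1_apply]
  rcases eq_or_ne i j with rfl | hij
  · rw [hD.hU0d, mul_one] at hK
    have hHK : D.Q i i - D.rho i ≤ D.H τ W i i + D.K τ W i i := by
      linarith [hD.neg_rho_le_H_apply_self hτ0 hW i]
    simp only [Ds, Da, diagonal_apply_eq]
    nlinarith [hτ.quadratic_pos hD i, mul_le_mul_of_nonneg_left hHK (by positivity : 0 ≤ 2 * τ ^ 2)]
  · have hQU := mul_nonneg (hD.hQoff i j hij) (hD.hU0o i j hij).1
    have hH := hD.H_apply_nonneg_of_ne hτ0 hW hij
    simp only [Ds, Da, diagonal_apply_ne _ hij]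
    nlinarith [mul_nonneg (by positivity : 0 ≤ 2 * τ ^ 2) (add_nonneg hH (hQU.trans hK))]

section Coefficients

variable (hτa : ∀ i, τ * D.a i < D.s i ^ 2)
include hτa

lemma isUnit_det_B0 : IsUnit (D.B0 τ).det := by
  rw [B0_eq_diagonal, det_diagonal]
  exact isUnit_iff_ne_zero.mpr (Finset.prod_ne_zero_iff.mpr fun i _ =>
    neg_ne_zero.mpr (by linarith [hτa i]))

lemma neg_inv_B0 : -(D.B0 τ)⁻¹ = diagonal fun i => (2 * D.s i ^ 2 - 2 * τ * D.a i)⁻¹ := by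
  rw [neg_eq_iff_eq_neg, diagonal_neg]
  refine inv_eq_left_inv ?_
  rw [B0_eq_diagonal, diagonal_mul_diagonal, ← diagonal_one]
  congr 1
  funext i
  have : 2 * D.s i ^ 2 - 2 * τ * D.a i ≠ 0 := by linarith [hτa i]
  rw [neg_mul_neg, inv_mul_cancel₀ this]

lemma Btm1_apply (W : Matrix (Fin n) (Fin n) ℝ) (i j : Fin n) :
    D.Btm1 τ W i j = (2 * D.s i ^ 2 - 2 * τ * D.a i)⁻¹ * D.Bm1 τ W i j := by
  rw [Btm1, neg_inv_B0 hτa, diagonal_mul]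

lemma Bt1_apply_nonneg (i j : Fin n) : 0 ≤ D.Bt1 τ i j := by
  rw [Bt1, neg_inv_B0 hτa, B1, Ds, diagonal_mul_diagonal]
  rcases eq_or_ne i j with rfl | hij
  · rw [diagonal_apply_eq]
    exact mul_nonneg (inv_nonneg.mpr (by linarith [hτa i])) (sq_nonneg _)
  · rw [diagonal_apply_ne _ hij]

lemma QW_iff : D.QW τ W ↔ W = D.Btm1 τ W + D.Bt1 τ * (W * W) :=
  quadratic_eq_zero_iff (isUnit_det_B0 hτa)

end Coefficients

section Good

variable (hD : D.Good) (hτ : D.TauOK troot τ)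
include hD hτ

lemma Good.Btm1_apply_nonneg (hW : Substoch W) (i j : Fin n) : 0 ≤ D.Btm1 τ W i j := by
  rw [Btm1_apply (hτ.mul_a_lt_sq hD)]
  exact mul_nonneg (inv_nonneg.mpr (by linarith [hτ.mul_a_lt_sq hD i]))
    (hD.Bm1_apply_nonneg hτ hW i j)

lemma Good.Btm1_apply_mono (hW : Substoch W) (hW' : Substoch W')
    (hWW' : ∀ i j, W i j ≤ W' i j) (i j : Fin n) : D.Btm1 τ W i j ≤ D.Btm1 τ W' i j := by
  rw [Btm1_apply (hτ.mul_a_lt_sq hD), Btm1_apply (hτ.mul_a_lt_sq hD)]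
  exact mul_le_mul_of_nonneg_left (hD.Bm1_apply_mono hτ.pos hW hW' hWW' i j)
    (inv_nonneg.mpr (by linarith [hτ.mul_a_lt_sq hD i]))

lemma Good.tendsto_Btm1 {g : ℕ → Matrix (Fin n) (Fin n) ℝ} {L : Matrix (Fin n) (Fin n) ℝ}
    (hg : ∀ k, Substoch (g k)) (hlim : Tendsto g atTop (𝓝 L)) :
    Tendsto (fun k => D.Btm1 τ (g k)) atTop (𝓝 (D.Btm1 τ L)) := by
  refine tendsto_pi_nhds.mpr fun i => tendsto_pi_nhds.mpr fun j => ?_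
  simp only [Btm1_apply (hτ.mul_a_lt_sq hD)]
  exact (hD.tendsto_Bm1_apply hτ.pos hg hlim i j).const_mul _

end Good

end Dat

/-- the QME-based iteration (each step solving a quadratic matrix
equation minimally) is well defined and converges monotonically to the minimal
substochastic solution of (QW). -/
theorem stmt8 {n : ℕ} (D : Dat n) (hD : D.Good) (troot : Fin n → ℝ) (τ : ℝ)
    (hτ : D.TauOK troot τ) (Wmin : Matrix (Fin n) (Fin n) ℝ)
    (hmin : Substoch Wmin ∧ D.QW τ Wmin ∧
      ∀ W', Substoch W' → D.QW τ W' → ∀ i j, Wmin i j ≤ W' i j) :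
    ∃ W : ℕ → Matrix (Fin n) (Fin n) ℝ, W 0 = 0 ∧
      (∀ k, (∀ i j, 0 ≤ W (k+1) i j) ∧
        W (k+1) = D.Btm1 τ (W k) + D.Bt1 τ * (W (k+1) * W (k+1)) ∧
        (∀ V, (∀ i j, 0 ≤ V i j) → V = D.Btm1 τ (W k) + D.Bt1 τ * (V * V) →
          ∀ i j, W (k+1) i j ≤ V i j)) ∧
      (∀ k, (∀ i j, 0 ≤ W k i j) ∧ (∀ i j, W k i j ≤ W (k+1) i j) ∧ Substoch (W k)) ∧
      Filter.Tendsto W Filter.atTop (nhds Wmin) := by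
  obtain ⟨hWmin, hQW, hWmin_le⟩ := hmin
  have hτa := hτ.mul_a_lt_sq hD
  have h : MonotoneQuadSol (D.Bt1 τ) (D.Btm1 τ) Wmin :=
    { T_nonneg := Dat.Bt1_apply_nonneg hτa
      S_nonneg := hWmin.1
      S_eq := (Dat.QW_iff hτa).mp hQW
      Φ_nonneg := fun W hW hWS => hD.Btm1_apply_nonneg hτ (hWmin.of_le hW hWS)
      Φ_mono := fun W W' hW hWW' hW'S => hD.Btm1_apply_mono hτ
        (hWmin.of_le hW fun i j => (hWW' i j).trans (hW'S i j))
        (hWmin.of_le (fun i j => (hW i j).trans (hWW' i j)) hW'S) hWW' }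
  have hbox := h.nestedIter_nonneg_le
  refine ⟨nestedIter (D.Bt1 τ) (D.Btm1 τ), rfl,
    fun k => ⟨(hbox (k + 1)).1, h.nestedIter_succ_eq k, fun V => h.nestedIter_succ_le_of_eq k⟩,
    fun k => ⟨(hbox k).1, h.nestedIter_le_succ k, hWmin.of_le (hbox k).1 (hbox k).2⟩, ?_⟩
  exact h.tendsto_nestedIter
    (fun g L hg hgS hlim => hD.tendsto_Btm1 hτ (fun k => hWmin.of_le (hg k) (hgS k)) hlim)
    (fun L hL hLS hLeq => hWmin_le L (hWmin.of_le hL hLS) ((Dat.QW_iff hτa).mpr hLeq))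
end
end
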